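/- arXiv:2412.05726 — 6 statements merged into one kernel-verified Lean document; each statement's English description precedes it below -/
import Mathlib

section
/- Let s_β, s_λ > 0 with s_β·s_λ < 1, β₀ ∈ ℝ, λ₀ ≥ 0. Define λ* = λ₀ if λ₀ ≥ |β₀|/s_β, and λ* = (λ₀ − s_λ|β₀|)⁺/(1 − s_λ s_β) otherwise, and define β* = (|β₀| − s_β λ*)⁺ · sgn(β₀). Then (β*, λ*) is a global minimizer of the proximal cost F(β,λ) = λ|β| + (β−β₀)²/(2s_β) + (λ−λ₀)²/(2s_λ) over ℝ × [0,∞). -/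
/-!
The pair satisfies the first-order optimality conditions of the cost: β* is the soft
thresholding of β₀ at level s_β λ*, so (β₀ − β*)/s_β is a subgradient of λ*|·| at β*, and
(λ₀ − λ*)/s_λ ≤ |β*| with equality when λ* > 0. Against these conditions
F(β, λ) − F(β*, λ*) ≥ (λ − λ*)(|β| − |β*|) + (β − β*)²/(2s_β) + (λ − λ*)²/(2s_λ),
and since ||β| − |β*|| ≤ |β − β*| the cross term is absorbed by AM–GM as soon as s_β s_λ ≤ 1.
-/

lemma mul_le_sq_div_add_sq_div {s t : ℝ} (hs : 0 < s) (ht : 0 < t) (hst : s * t ≤ 1) (x y : ℝ) :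
    x * y ≤ x ^ 2 / (2 * s) + y ^ 2 / (2 * t) := by
  rw [div_add_div _ _ (by positivity) (by positivity), le_div_iff₀ (by positivity)]
  nlinarith [mul_nonneg ht.le (sq_nonneg (x - s * y)),
    mul_nonneg hs.le (mul_nonneg (sub_nonneg.2 hst) (sq_nonneg y))]

lemma mul_sub_le_of_abs_le_of_mul_eq {u c b : ℝ} (hu : |u| ≤ c) (hub : u * b = c * |b|)
    (β : ℝ) :
    u * (β - b) ≤ c * (|β| - |b|) := by
  have : u * β ≤ c * |β| := by
    calc u * β ≤ |u| * |β| := by rw [← abs_mul]; exact le_abs_self _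
      _ ≤ c * |β| := mul_le_mul_of_nonneg_right hu (abs_nonneg β)
  linarith

noncomputable def softThreshold (t x : ℝ) : ℝ := max (|x| - t) 0 * Real.sign x

lemma abs_softThreshold {t : ℝ} (ht : 0 ≤ t) (x : ℝ) :
    |softThreshold t x| = max (|x| - t) 0 := by
  rcases lt_trichotomy x 0 with hx | rfl | hx
  · simp [softThreshold, Real.sign_of_neg hx]
  · simpa [softThreshold] using ht
  · simp [softThreshold, Real.sign_of_pos hx]

lemma abs_sub_softThreshold_le {t : ℝ} (ht : 0 ≤ t) (x : ℝ) : |x - softThreshold t x| ≤ t := by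
  rcases lt_trichotomy x 0 with hx | rfl | hx
  · simp only [softThreshold, Real.sign_of_neg hx, abs_of_neg hx]
    rw [abs_le]; constructor <;> cases max_cases (-x - t) 0 <;> linarith
  · simpa [softThreshold] using ht
  · simp only [softThreshold, Real.sign_of_pos hx, abs_of_pos hx]
    rw [abs_le]; constructor <;> cases max_cases (x - t) 0 <;> linarith

lemma sub_softThreshold_mul_self {t : ℝ} (ht : 0 ≤ t) (x : ℝ) :
    (x - softThreshold t x) * softThreshold t x = t * |softThreshold t x| := by
  rw [abs_softThreshold ht]
  rcases lt_trichotomy x 0 with hx | rfl | hx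
  · simp only [softThreshold, Real.sign_of_neg hx, abs_of_neg hx]
    rcases max_cases (-x - t) 0 with ⟨h, -⟩ | ⟨h, -⟩ <;> rw [h] <;> ring
  · simp [softThreshold, ht]
  · simp only [softThreshold, Real.sign_of_pos hx, abs_of_pos hx]
    rcases max_cases (x - t) 0 with ⟨h, -⟩ | ⟨h, -⟩ <;> rw [h] <;> ring

noncomputable def proxCost (sβ sl β₀ l0 β lam : ℝ) : ℝ :=
  lam * |β| + (β - β₀) ^ 2 / (2 * sβ) + (lam - l0) ^ 2 / (2 * sl)

lemma proxCost_le_of_optimality {sβ sl β₀ l0 βs ls : ℝ} (hsβ : 0 < sβ) (hsl : 0 < sl)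
    (hprod : sβ * sl ≤ 1)
    (hβ : |β₀ - βs| ≤ sβ * ls) (hβs : (β₀ - βs) * βs = sβ * ls * |βs|)
    (hl : l0 - ls ≤ sl * |βs|) (hcomp : ls * (sl * |βs| - (l0 - ls)) = 0)
    {β lam : ℝ} (hlam : 0 ≤ lam) :
    proxCost sβ sl β₀ l0 βs ls ≤ proxCost sβ sl β₀ l0 β lam := by
  have hβ' : (β₀ - βs) / sβ * (β - βs) ≤ ls * (|β| - |βs|) :=
    mul_sub_le_of_abs_le_of_mul_eq
      (by rw [abs_div, abs_of_pos hsβ, div_le_iff₀ hsβ]; linarith)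
      (by rw [div_mul_eq_mul_div, hβs]; field_simp) β
  have hl' : (l0 - ls) / sl * (lam - ls) ≤ |βs| * (lam - ls) := by
    rw [div_mul_eq_mul_div, div_le_iff₀ hsl]
    nlinarith [mul_le_mul_of_nonneg_left hl hlam]
  have hcross :
      -((lam - ls) * (|β| - |βs|)) ≤ (β - βs) ^ 2 / (2 * sβ) + (lam - ls) ^ 2 / (2 * sl) := by
    calc -((lam - ls) * (|β| - |βs|)) ≤ |lam - ls| * abs (|β| - |βs|) := by
          rw [← abs_mul]; exact neg_le_abs _
      _ ≤ |lam - ls| * |β - βs| :=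
          mul_le_mul_of_nonneg_left (abs_abs_sub_abs_le_abs_sub β βs) (abs_nonneg _)
      _ = |β - βs| * |lam - ls| := mul_comm _ _
      _ ≤ |β - βs| ^ 2 / (2 * sβ) + |lam - ls| ^ 2 / (2 * sl) :=
          mul_le_sq_div_add_sq_div hsβ hsl hprod _ _
      _ = (β - βs) ^ 2 / (2 * sβ) + (lam - ls) ^ 2 / (2 * sl) := by rw [sq_abs, sq_abs]
  have hexpand : proxCost sβ sl β₀ l0 β lam - proxCost sβ sl β₀ l0 βs ls
      = lam * |β| - ls * |βs| + (β - βs) ^ 2 / (2 * sβ) - (β₀ - βs) / sβ * (β - βs)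
        + (lam - ls) ^ 2 / (2 * sl) - (l0 - ls) / sl * (lam - ls) := by
    unfold proxCost; field_simp; ring
  linarith

noncomputable def optimalPenalty (sβ sl β₀ l0 : ℝ) : ℝ :=
  if |β₀| / sβ ≤ l0 then l0 else max (l0 - sl * |β₀|) 0 / (1 - sl * sβ)

lemma optimalPenalty_nonneg {sβ sl β₀ l0 : ℝ} (hprod : sβ * sl < 1) (hl0 : 0 ≤ l0) :
    0 ≤ optimalPenalty sβ sl β₀ l0 := by
  unfold optimalPenalty
  split_ifs
  · exact hl0
  · exact div_nonneg (le_max_right _ _) (by linarith)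

lemma optimalPenalty_kkt {sβ sl β₀ l0 : ℝ} (hsβ : 0 < sβ) (hprod : sβ * sl < 1) :
    let ls := optimalPenalty sβ sl β₀ l0
    l0 - ls ≤ sl * max (|β₀| - sβ * ls) 0 ∧
      ls * (sl * max (|β₀| - sβ * ls) 0 - (l0 - ls)) = 0 := by
  intro ls
  have hdet : 0 < 1 - sl * sβ := by linarith
  by_cases hsmall : |β₀| / sβ ≤ l0
  · have hls : ls = l0 := if_pos hsmall
    rw [div_le_iff₀ hsβ] at hsmall
    rw [hls, max_eq_right (by linarith)]
    simp
  have hls : ls = max (l0 - sl * |β₀|) 0 / (1 - sl * sβ) := if_neg hsmall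
  rw [not_le, lt_div_iff₀ hsβ] at hsmall
  rcases le_total (l0 - sl * |β₀|) 0 with hl | hl
  · rw [hls, max_eq_right hl, zero_div]
    simp only [mul_zero, sub_zero, zero_mul, and_true]
    rw [max_eq_left (abs_nonneg _)]
    linarith
  · rw [max_eq_left hl] at hls
    have hshift : l0 - ls = sl * (|β₀| - sβ * ls) := by
      rw [hls]; field_simp; ring
    have hpos : 0 < |β₀| - sβ * ls := by
      have : (1 - sl * sβ) * (|β₀| - sβ * ls) = |β₀| - sβ * l0 := by
        rw [hls]; field_simp; ring
      nlinarith
    rw [max_eq_left hpos.le, hshift]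
    simp

/-- Closed form for the variable-penalty ℓ1 proximal operator when s_β s_λ < 1:
the stated (β*, λ*) globally minimizes the proximal cost over ℝ × [0,∞). -/
theorem stmt_2 (sβ sl β₀ l0 : ℝ) (hsβ : 0 < sβ) (hsl : 0 < sl)
    (hprod : sβ * sl < 1) (hl0 : 0 ≤ l0) :
    let F : ℝ → ℝ → ℝ := fun β lam =>
      lam * |β| + (β - β₀)^2 / (2*sβ) + (lam - l0)^2 / (2*sl)
    let lamstar : ℝ :=
      if |β₀| / sβ ≤ l0 then l0 else max (l0 - sl*|β₀|) 0 / (1 - sl*sβ)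
    let βstar : ℝ := max (|β₀| - sβ*lamstar) 0 * Real.sign β₀
    0 ≤ lamstar ∧ ∀ β lam : ℝ, 0 ≤ lam → F βstar lamstar ≤ F β lam := by
  intro F lamstar βstar
  have hnonneg : 0 ≤ lamstar := optimalPenalty_nonneg hprod hl0
  have hthr : 0 ≤ sβ * lamstar := mul_nonneg hsβ.le hnonneg
  have habs : |βstar| = max (|β₀| - sβ * lamstar) 0 := abs_softThreshold hthr β₀
  obtain ⟨hl, hcomp⟩ : l0 - lamstar ≤ sl * |βstar| ∧
      lamstar * (sl * |βstar| - (l0 - lamstar)) = 0 := by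
    rw [habs]; exact optimalPenalty_kkt hsβ hprod
  exact ⟨hnonneg, fun β lam hlam => proxCost_le_of_optimality hsβ hsl hprod.le
    (abs_sub_softThreshold_le hthr β₀) (sub_softThreshold_mul_self hthr β₀) hl hcomp hlam⟩
end

section
/- Let s_β, s_λ > 0 with s_β·s_λ ≥ 1, β₀ ∈ ℝ, λ₀ ≥ 0. Define λ* = λ₀ if λ₀/√s_λ > |β₀|/√s_β and λ* = 0 otherwise, and define β* = (|β₀| − s_β λ*)⁺ · sgn(β₀). Then (β*, λ*) is a global minimizer of the proximal cost F(β,λ) = λ|β| + (β−β₀)²/(2s_β) + (λ−λ₀)²/(2s_λ) over ℝ × [0,∞). -/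
/-! With `u = |β|/√s_β`, `v = λ/√s_λ`, `T = |β₀|/√s_β` and `L = λ₀/√s_λ`, the bounds
`(β - β₀)² ≥ (|β| - |β₀|)²` and `λ|β| ≥ uv` (this is where `s_β s_λ ≥ 1` enters) give
`2F(β, λ) ≥ (u - T)² + (v - L)² + 2uv = (u + v)² - 2(uT + vL) + T² + L²`,
which for `u, v ≥ 0` is at least `min(T, L)²`. The two candidates `(0, λ₀)` and `(β₀, 0)`
attain `T²/2` and `L²/2`, and `λ*` selects the smaller one. -/

open Real

theorem sq_min_le_sub_sq_add_sub_sq_add_two_mul {u v T L : ℝ} (hu : 0 ≤ u) (hv : 0 ≤ v) :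
    min T L ^ 2 ≤ (u - T) ^ 2 + (v - L) ^ 2 + 2 * u * v := by
  rcases le_total T L with h | h
  · rw [min_eq_left h]
    nlinarith [sq_nonneg (u + v - L), mul_le_mul_of_nonneg_left h hu]
  · rw [min_eq_right h]
    nlinarith [sq_nonneg (u + v - T), mul_le_mul_of_nonneg_left h hv]

theorem Real.abs_mul_sign (x : ℝ) : |x| * Real.sign x = x := by
  rcases lt_trichotomy x 0 with h | rfl | h
  · rw [Real.sign_of_neg h, abs_of_neg h]; ring
  · simp
  · rw [Real.sign_of_pos h, abs_of_pos h, mul_one]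

theorem div_sqrt_sq {x s : ℝ} (hs : 0 ≤ s) : (x / √s) ^ 2 = x ^ 2 / s := by
  rw [div_pow, sq_sqrt hs]

theorem sq_min_div_sqrt_le_proxCost {sβ sl β₀ l0 β lam : ℝ} (hsβ : 0 < sβ) (hsl : 0 < sl)
    (hprod : 1 ≤ sβ * sl) (hlam : 0 ≤ lam) :
    min (|β₀| / √sβ) (l0 / √sl) ^ 2 / 2 ≤
      lam * |β| + (β - β₀) ^ 2 / (2 * sβ) + (lam - l0) ^ 2 / (2 * sl) := by
  have hβ : (|β| / √sβ - |β₀| / √sβ) ^ 2 ≤ (β - β₀) ^ 2 / sβ := by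
    rw [← sub_div, div_sqrt_sq hsβ.le]
    have := sq_le_sq.mpr (by simpa using abs_abs_sub_abs_le_abs_sub β β₀)
    exact div_le_div_of_nonneg_right this hsβ.le
  have hl : (lam / √sl - l0 / √sl) ^ 2 = (lam - l0) ^ 2 / sl := by
    rw [← sub_div, div_sqrt_sq hsl.le]
  have hcross : |β| / √sβ * (lam / √sl) ≤ lam * |β| := by
    rw [div_mul_div_comm, ← sqrt_mul hsβ.le, mul_comm]
    exact div_le_self (by positivity) (one_le_sqrt.mpr hprod)
  have key := sq_min_le_sub_sq_add_sub_sq_add_two_mul (T := |β₀| / √sβ) (L := l0 / √sl)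
    (by positivity : 0 ≤ |β| / √sβ) (by positivity : 0 ≤ lam / √sl)
  have e1 : (β - β₀) ^ 2 / (2 * sβ) = (β - β₀) ^ 2 / sβ / 2 := by ring
  have e2 : (lam - l0) ^ 2 / (2 * sl) = (lam - l0) ^ 2 / sl / 2 := by ring
  rw [e1, e2]
  linarith

theorem abs_le_mul_of_div_sqrt_lt {sβ sl x l0 : ℝ} (hsβ : 0 < sβ) (hsl : 0 < sl)
    (hprod : 1 ≤ sβ * sl) (hl0 : 0 ≤ l0) (h : |x| / √sβ < l0 / √sl) : |x| ≤ sβ * l0 := by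
  have hsqrt : l0 / √sl ≤ l0 * √sβ := by
    rw [div_le_iff₀ (sqrt_pos.mpr hsl), mul_assoc, ← sqrt_mul hsβ.le]
    exact le_mul_of_one_le_right hl0 (one_le_sqrt.mpr hprod)
  have := (div_lt_iff₀ (sqrt_pos.mpr hsβ)).mp (h.trans_le hsqrt)
  rw [mul_assoc, mul_self_sqrt hsβ.le] at this
  linarith

/-- Closed form for the variable-penalty ℓ1 proximal operator when s_β s_λ ≥ 1:
the stated (β*, λ*) globally minimizes the proximal cost over ℝ × [0,∞). -/
theorem stmt_3 (sβ sl β₀ l0 : ℝ) (hsβ : 0 < sβ) (hsl : 0 < sl)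
    (hprod : 1 ≤ sβ * sl) (hl0 : 0 ≤ l0) :
    let F : ℝ → ℝ → ℝ := fun β lam =>
      lam * |β| + (β - β₀)^2 / (2*sβ) + (lam - l0)^2 / (2*sl)
    let lamstar : ℝ :=
      if |β₀| / Real.sqrt sβ < l0 / Real.sqrt sl then l0 else 0
    let βstar : ℝ := max (|β₀| - sβ*lamstar) 0 * Real.sign β₀
    0 ≤ lamstar ∧ ∀ β lam : ℝ, 0 ≤ lam → F βstar lamstar ≤ F β lam := by
  intro F lamstar βstar
  refine ⟨by dsimp only [lamstar]; split_ifs <;> simp [hl0], fun β lam hlam => ?_⟩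
  refine (le_of_eq ?_).trans (sq_min_div_sqrt_le_proxCost hsβ hsl hprod hlam)
  dsimp only [F, βstar, lamstar]
  split_ifs with h
  · have hβ₀ : |β₀| - sβ * l0 ≤ 0 :=
      sub_nonpos.mpr (abs_le_mul_of_div_sqrt_lt hsβ hsl hprod hl0 h)
    rw [max_eq_right hβ₀, zero_mul, abs_zero, min_eq_left h.le, div_sqrt_sq hsβ.le, sq_abs]
    ring
  · rw [mul_zero, sub_zero, max_eq_left (abs_nonneg β₀), Real.abs_mul_sign,
      min_eq_right (not_lt.mp h), div_sqrt_sq hsl.le]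
    ring
end

section
/- Let s_β, s_λ > 0 with s_β·s_λ > 1, β₀ ∈ ℝ with β₀ ≠ 0, and λ₀ ∈ ℝ. Then the marginal proximal cost m(λ) = inf over β ∈ ℝ of [λ|β| + (β−β₀)²/(2s_β) + (λ−λ₀)²/(2s_λ)] is not a convex function of λ on [0,∞). -/
/-!
For `0 ≤ λ ≤ |β₀| / s_β` the infimum over `β` is attained at the soft-thresholded point
`β₀ - s_β λ sign β₀`, which gives `m(λ) = λ |β₀| - s_β λ² / 2 + (λ - λ₀)² / (2 s_λ)`.
On that interval `m` is a quadratic with leading coefficient `(1 / s_λ - s_β) / 2 < 0`,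
so the midpoint inequality fails between `0` and `|β₀| / s_β`.
-/

section SoftThreshold

variable {lam s b : ℝ}

-- `lam |b| ≤ lam |β| + lam |β - b|`, and AM-GM bounds `lam |β - b|` by `(β - b)² / (2s) + s lam² / 2`.
lemma mul_abs_sub_le_mul_abs_add_sq_div (hlam : 0 ≤ lam) (hs : 0 < s) (β : ℝ) :
    lam * |b| - s * lam ^ 2 / 2 ≤ lam * |β| + (β - b) ^ 2 / (2 * s) := by
  have htri : |b| ≤ |β| + |β - b| := by
    simpa [abs_sub_comm] using abs_add_le β (b - β)
  have hamgm : lam * |β - b| - s * lam ^ 2 / 2 ≤ (β - b) ^ 2 / (2 * s) := by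
    rw [le_div_iff₀ (by positivity), ← sq_abs (β - b)]
    nlinarith [sq_nonneg (|β - b| - s * lam)]
  nlinarith [mul_le_mul_of_nonneg_left htri hlam]

lemma exists_mul_abs_add_sq_div_eq (hs : 0 < s) (hlam : s * lam ≤ |b|) :
    ∃ β, lam * |β| + (β - b) ^ 2 / (2 * s) = lam * |b| - s * lam ^ 2 / 2 := by
  rcases le_total 0 b with hb | hb
  · rw [abs_of_nonneg hb] at hlam ⊢
    refine ⟨b - s * lam, ?_⟩
    rw [abs_of_nonneg (by linarith)]
    field_simp
    ring
  · rw [abs_of_nonpos hb] at hlam ⊢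
    refine ⟨b + s * lam, ?_⟩
    rw [abs_of_nonpos (by linarith)]
    field_simp
    ring

lemma iInf_mul_abs_add_sq_div_add (hs : 0 < s) (hlam₀ : 0 ≤ lam) (hlam : s * lam ≤ |b|)
    (C : ℝ) :
    ⨅ β : ℝ, (lam * |β| + (β - b) ^ 2 / (2 * s) + C) = lam * |b| - s * lam ^ 2 / 2 + C := by
  have hlower (β : ℝ) : lam * |b| - s * lam ^ 2 / 2 + C ≤ lam * |β| + (β - b) ^ 2 / (2 * s) + C :=
    add_le_add_left (mul_abs_sub_le_mul_abs_add_sq_div hlam₀ hs β) C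
  obtain ⟨β, hβ⟩ := exists_mul_abs_add_sq_div_eq hs hlam
  refine le_antisymm ?_ (le_ciInf hlower)
  calc ⨅ β : ℝ, (lam * |β| + (β - b) ^ 2 / (2 * s) + C)
      ≤ lam * |β| + (β - b) ^ 2 / (2 * s) + C :=
        ciInf_le ⟨_, Set.forall_mem_range.2 hlower⟩ β
    _ = lam * |b| - s * lam ^ 2 / 2 + C := by rw [hβ]

end SoftThreshold

lemma not_convexOn_of_eqOn_quadratic {f : ℝ → ℝ} {s : Set ℝ} {x y A B C : ℝ}
    (hx : x ∈ s) (hy : y ∈ s) (hxy : x ≠ y) (hA : A < 0)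
    (hf : Set.EqOn f (fun t => A * t ^ 2 + B * t + C) (segment ℝ x y)) :
    ¬ ConvexOn ℝ s f := by
  intro hconv
  have hmid : (1 / 2 : ℝ) * x + 1 / 2 * y ∈ segment ℝ x y :=
    ⟨1 / 2, 1 / 2, by norm_num, by norm_num, by norm_num, rfl⟩
  have h := hconv.2 hx hy (by norm_num : (0 : ℝ) ≤ 1 / 2) (by norm_num : (0 : ℝ) ≤ 1 / 2)
    (by norm_num)
  simp only [smul_eq_mul] at h
  rw [hf hmid, hf (left_mem_segment ℝ x y), hf (right_mem_segment ℝ x y)] at h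
  have hsq : 0 < (x - y) ^ 2 := by positivity [sub_ne_zero.2 hxy]
  nlinarith

/-- When s_β s_λ > 1 and β₀ ≠ 0, the marginal (profiled over β) proximal cost is
not convex in λ on [0,∞). -/
theorem stmt_6 (sβ sl β₀ l0 : ℝ) (hsβ : 0 < sβ) (hsl : 0 < sl)
    (hprod : 1 < sβ * sl) (hβ₀ : β₀ ≠ 0) :
    ¬ ConvexOn ℝ (Set.Ici (0:ℝ))
      (fun lam => ⨅ β : ℝ, (lam * |β| + (β - β₀)^2 / (2*sβ) + (lam - l0)^2 / (2*sl))) := by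
  set T := |β₀| / sβ
  have hT : 0 < T := by positivity
  have hA : 1 / (2 * sl) - sβ / 2 < 0 := by
    rw [sub_neg, div_lt_div_iff₀ (by positivity) two_pos]
    linarith
  refine not_convexOn_of_eqOn_quadratic Set.self_mem_Ici hT.le hT.ne hA
    (B := |β₀| - l0 / sl) (C := l0 ^ 2 / (2 * sl)) ?_
  intro lam hlam
  rw [segment_eq_Icc hT.le] at hlam
  have hlamT : sβ * lam ≤ |β₀| := (le_div_iff₀' hsβ).1 hlam.2
  simp only [iInf_mul_abs_add_sq_div_add hsβ hlam.1 hlamT]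
  field_simp
  ring
end

section
/- Let a, s_β, s_λ > 0, β₀ ∈ ℝ, λ₀ ∈ ℝ, and set λ* = (λ₀ + √(λ₀² + 4 s_λ a))/2. If 2|β₀| ≤ s_β(λ₀ + √(λ₀² + 4 s_λ a)), then the point (0, λ*) is a coordinatewise minimizer of the P2 objective G(β,λ) = λ|β| + (β−β₀)²/(2s_β) + (λ−λ₀)²/(2s_λ) − a·log λ: namely, G(0, λ*) ≤ G(β, λ*) for all β ∈ ℝ, and G(0, λ*) ≤ G(0, λ) for all λ > 0. -/
/-! The objective splits coordinatewise once one coordinate is frozen. For fixed `λ*`, the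
`β`-part `λ* |β| + (β - β₀)² / (2 s_β)` is minimized at `0` when `|β₀| ≤ s_β λ*`
(the soft-thresholding condition), which is the hypothesis. For `β = 0`, the `λ`-part
`(λ - λ₀)² / (2 s_λ) - a log λ` is strictly convex on `λ > 0`, and `λ*` is the positive root of
`λ² - λ₀ λ - s_λ a = 0`, i.e. its stationary point. -/

open Real

lemma sq_div_le_mul_abs_add_sq_sub_div {s c b₀ : ℝ} (hs : 0 < s) (hb₀ : |b₀| ≤ s * c) (b : ℝ) :
    b₀ ^ 2 / (2 * s) ≤ c * |b| + (b - b₀) ^ 2 / (2 * s) := by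
  have hcross : b * b₀ ≤ |b| * (s * c) :=
    (le_abs_self _).trans ((abs_mul b b₀).trans_le (mul_le_mul_of_nonneg_left hb₀ (abs_nonneg b)))
  have hnum : b₀ ^ 2 ≤ 2 * s * (c * |b|) + (b - b₀) ^ 2 := by nlinarith [sq_nonneg b]
  calc b₀ ^ 2 / (2 * s) ≤ (2 * s * (c * |b|) + (b - b₀) ^ 2) / (2 * s) := by gcongr
    _ = c * |b| + (b - b₀) ^ 2 / (2 * s) := by field_simp

lemma quadraticRoot_pos {p k : ℝ} (hk : 0 < k) : 0 < (p + √(p ^ 2 + 4 * k)) / 2 := by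
  have : |p| < √(p ^ 2 + 4 * k) := by
    rw [← sqrt_sq_eq_abs]
    exact sqrt_lt_sqrt (sq_nonneg p) (by linarith)
  linarith [neg_abs_le p]

lemma quadraticRoot_mul_sub {p k : ℝ} (hk : 0 < k) :
    (p + √(p ^ 2 + 4 * k)) / 2 * ((p + √(p ^ 2 + 4 * k)) / 2 - p) = k := by
  have := sq_sqrt (show 0 ≤ p ^ 2 + 4 * k by positivity)
  linear_combination this / 4

/-- `hstat` says `μ` is a stationary point; the tangent-line bound `log x ≤ x - 1` does the rest. -/
lemma sq_sub_div_sub_mul_log_le {s a l0 μ : ℝ} (hs : 0 < s) (ha : 0 ≤ a) (hμ : 0 < μ)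
    (hstat : μ * (μ - l0) = s * a) {l : ℝ} (hl : 0 < l) :
    (μ - l0) ^ 2 / (2 * s) - a * log μ ≤ (l - l0) ^ 2 / (2 * s) - a * log l := by
  have hlog : log l - log μ ≤ l / μ - 1 := by
    rw [← log_div hl.ne' hμ.ne']
    exact log_le_sub_one_of_pos (div_pos hl hμ)
  have hlin : a * (l / μ - 1) = (μ - l0) * (l - μ) / s := by
    field_simp
    linear_combination (μ - l) * hstat
  have hquad : (μ - l0) * (l - μ) / s ≤ ((l - l0) ^ 2 - (μ - l0) ^ 2) / (2 * s) := by
    rw [div_le_div_iff₀ hs (by positivity)]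
    nlinarith [sq_nonneg (l - μ)]
  have : a * (log l - log μ) ≤ a * (l / μ - 1) := mul_le_mul_of_nonneg_left hlog ha
  have : ((l - l0) ^ 2 - (μ - l0) ^ 2) / (2 * s) =
      (l - l0) ^ 2 / (2 * s) - (μ - l0) ^ 2 / (2 * s) := by ring
  linarith

/-- If 2|β₀| ≤ s_β(l0 + √(l0² + 4s_λa)), the point (0, λ*) with
λ* = (l0 + √(l0² + 4s_λa))/2 is a coordinatewise minimizer of the P2 objective. -/
theorem stmt_11 (a sβ sl β₀ l0 : ℝ) (ha : 0 < a) (hsβ : 0 < sβ) (hsl : 0 < sl)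
    (hcond : 2*|β₀| ≤ sβ * (l0 + Real.sqrt (l0^2 + 4*sl*a))) :
    let lamstar : ℝ := (l0 + Real.sqrt (l0^2 + 4*sl*a)) / 2
    let G : ℝ → ℝ → ℝ := fun β lam =>
      lam * |β| + (β - β₀)^2 / (2*sβ) + (lam - l0)^2 / (2*sl) - a * Real.log lam
    (∀ β : ℝ, G 0 lamstar ≤ G β lamstar) ∧
    (∀ lam : ℝ, 0 < lam → G 0 lamstar ≤ G 0 lam) := by
  intro lamstar G
  have hk : 0 < sl * a := mul_pos hsl ha
  have hpos : 0 < lamstar := by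
    simpa only [lamstar, mul_assoc] using quadraticRoot_pos (p := l0) hk
  have hstat : lamstar * (lamstar - l0) = sl * a := by
    simpa only [lamstar, mul_assoc] using quadraticRoot_mul_sub (p := l0) hk
  have hthresh : |β₀| ≤ sβ * lamstar := by simp only [lamstar]; linarith
  refine ⟨fun β => ?_, fun lam hlam => ?_⟩
  · have := sq_div_le_mul_abs_add_sq_sub_div hsβ hthresh β
    simp only [G, abs_zero, mul_zero, zero_sub, neg_sq]
    linarith
  · have := sq_sub_div_sub_mul_log_le hsl ha.le hpos hstat hlam
    simp only [G, abs_zero, mul_zero, zero_sub, neg_sq, zero_add]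
    linarith
end

section
/- Let a, s_β, s_λ > 0 with s_β·s_λ ≠ 1, β₀ ∈ ℝ, λ₀ ∈ ℝ. Suppose (β, λ) with β ≠ 0 and λ > 0 satisfies the stationarity conditions of the P2 objective: λ·sgn(β) + (β−β₀)/s_β = 0 and |β| + (λ−λ₀)/s_λ − a/λ = 0. Then λ satisfies the quadratic equation (1 − s_β s_λ)λ² + (s_λ|β₀| − λ₀)λ − s_λ a = 0; equivalently, λ = [s_λ|β₀| − λ₀ ± √((λ₀ − s_λ|β₀|)² + 4(1 − s_β s_λ) s_λ a)] / (2(s_β s_λ − 1)). -/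
/-!
Soft thresholding: the first stationarity condition says β₀ = β + s_β λ sgn β, and since s_β λ > 0
this shifts β away from zero, so |β₀| = |β| + s_β λ. Substituting |β| = |β₀| − s_β λ into the second
condition and multiplying by s_λ λ gives the quadratic in λ. A quadratic with a real root has a
nonnegative discriminant, so the quadratic formula applies with the real square root.
-/

theorem Real.abs_add_mul_sign {x c : ℝ} (hx : x ≠ 0) (hc : 0 ≤ c) :
    |x + c * Real.sign x| = |x| + c := by
  rcases hx.lt_or_gt with hneg | hpos
  · rw [Real.sign_of_neg hneg, abs_of_neg hneg, abs_of_neg (by linarith)]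
    ring
  · rw [Real.sign_of_pos hpos, abs_of_pos hpos, abs_of_pos (by linarith)]
    ring

theorem Real.eq_quadratic_formula_of_quadratic_eq_zero {a b c x : ℝ} (ha : a ≠ 0)
    (hx : a * (x * x) + b * x + c = 0) :
    x = (-b + √(discrim a b c)) / (2 * a) ∨ x = (-b - √(discrim a b c)) / (2 * a) := by
  have hdisc : discrim a b c = (2 * a * x + b) ^ 2 := discrim_eq_sq_of_quadratic_eq_zero hx
  refine (quadratic_eq_zero_iff ha ?_ x).mp hx
  rw [Real.mul_self_sqrt (hdisc ▸ sq_nonneg _)]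

theorem stmt_12_general (a sβ sl β₀ l0 β lam : ℝ) (hsβ : 0 < sβ) (hsl : 0 < sl)
    (hne : sβ * sl ≠ 1) (hβ : β ≠ 0) (hlam : 0 < lam)
    (hstat1 : lam * Real.sign β + (β - β₀) / sβ = 0)
    (hstat2 : |β| + (lam - l0) / sl - a / lam = 0) :
    (1 - sβ*sl) * lam^2 + (sl*|β₀| - l0) * lam - sl*a = 0 ∧
    (lam = (sl*|β₀| - l0 + Real.sqrt ((l0 - sl*|β₀|)^2 + 4*(1 - sβ*sl)*sl*a))
            / (2*(sβ*sl - 1)) ∨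
     lam = (sl*|β₀| - l0 - Real.sqrt ((l0 - sl*|β₀|)^2 + 4*(1 - sβ*sl)*sl*a))
            / (2*(sβ*sl - 1))) := by
  have hβ₀ : β₀ = β + sβ * lam * Real.sign β := by
    field_simp at hstat1
    linarith
  have habs : |β₀| = |β| + sβ * lam := by
    rw [hβ₀, Real.abs_add_mul_sign hβ (by positivity)]
  have hcleared : sl * lam * |β| + lam * (lam - l0) - sl * a = 0 := by
    field_simp at hstat2
    linarith
  have hq : (1 - sβ*sl) * lam^2 + (sl*|β₀| - l0) * lam - sl*a = 0 := by
    linear_combination hcleared + sl * lam * habs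
  have hdisc : discrim (sβ*sl - 1) (l0 - sl*|β₀|) (sl*a)
      = (l0 - sl*|β₀|)^2 + 4*(1 - sβ*sl)*sl*a := by
    unfold discrim
    ring
  have hroots := Real.eq_quadratic_formula_of_quadratic_eq_zero (sub_ne_zero.mpr hne)
    (b := l0 - sl*|β₀|) (c := sl*a) (x := lam) (by linear_combination -hq)
  rw [hdisc, neg_sub] at hroots
  exact ⟨hq, hroots⟩

/-- Any stationary point of the P2 objective with β ≠ 0 has λ satisfying the quadratic
(1 − s_βs_λ)λ² + (s_λ|β₀| − l0)λ − s_λa = 0, equivalently the quadratic-formula form. -/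
theorem stmt_12 (a sβ sl β₀ l0 β lam : ℝ) (ha : 0 < a) (hsβ : 0 < sβ) (hsl : 0 < sl)
    (hne : sβ * sl ≠ 1) (hβ : β ≠ 0) (hlam : 0 < lam)
    (hstat1 : lam * Real.sign β + (β - β₀) / sβ = 0)
    (hstat2 : |β| + (lam - l0) / sl - a / lam = 0) :
    (1 - sβ*sl) * lam^2 + (sl*|β₀| - l0) * lam - sl*a = 0 ∧
    (lam = (sl*|β₀| - l0 + Real.sqrt ((l0 - sl*|β₀|)^2 + 4*(1 - sβ*sl)*sl*a))
            / (2*(sβ*sl - 1)) ∨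
     lam = (sl*|β₀| - l0 - Real.sqrt ((l0 - sl*|β₀|)^2 + 4*(1 - sβ*sl)*sl*a))
            / (2*(sβ*sl - 1))) :=
  stmt_12_general a sβ sl β₀ l0 β lam hsβ hsl hne hβ hlam hstat1 hstat2
end

section
/- Let τ > 0, let ρ : (0,∞) → ℝ be twice differentiable, and let λ* : [0,∞) → (0,∞) be a differentiable function satisfying the stationarity identity λ*(t)·(τt + ρ'(λ*(t))) = 1 for all t ≥ 0, with 1/λ*(t)² + ρ''(λ*(t)) ≠ 0. Define g(t) = τ·λ*(t)·t − log λ*(t) + ρ(λ*(t)). Then g is twice differentiable with g''(t) = −τ² / ((τt + ρ'(λ*(t)))² + ρ''(λ*(t))). -/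
/-!
Envelope argument: by the stationarity identity the terms of `g'` involving `λ*'` cancel,
so `g'(t) = τ λ*(t)` and `g''(t) = τ λ*'(t)`. Differentiating the stationarity identity
implicitly gives `λ*' (τt + ρ'(λ*)) + λ* (τ + ρ''(λ*) λ*') = 0`; since `τt + ρ'(λ*) = 1/λ*`
this solves to `λ*' = -τ / ((τt + ρ'(λ*))² + ρ''(λ*))`.
-/

open Filter Topology

noncomputable def profiledPenalty (τ : ℝ) (ρ lam : ℝ → ℝ) (s : ℝ) : ℝ :=
  τ * lam s * s - Real.log (lam s) + ρ (lam s)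

lemma hasDerivAt_profiledPenalty {τ s D : ℝ} {ρ lam : ℝ → ℝ}
    (hlam : HasDerivAt lam D s) (hρ : DifferentiableAt ℝ ρ (lam s))
    (hstat : lam s * (τ * s + deriv ρ (lam s)) = 1) :
    HasDerivAt (profiledPenalty τ ρ lam) (τ * lam s) s := by
  have hne : lam s ≠ 0 := left_ne_zero_of_mul_eq_one hstat
  have h := (((hlam.const_mul τ).mul (hasDerivAt_id s)).sub
    ((Real.hasDerivAt_log hne).comp s hlam)).add (hρ.hasDerivAt.comp s hlam)
  refine h.congr_deriv ?_
  rw [inv_eq_of_mul_eq_one_right hstat, id]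
  ring

lemma deriv_eq_of_stationary {τ t D B : ℝ} {lam dρ : ℝ → ℝ}
    (hlam : HasDerivAt lam D t) (hdρ : HasDerivAt dρ B (lam t))
    (hstat : ∀ᶠ s in 𝓝 t, lam s * (τ * s + dρ (lam s)) = 1)
    (hnz : 1 / (lam t) ^ 2 + B ≠ 0) :
    D = -τ / ((τ * t + dρ (lam t)) ^ 2 + B) := by
  have hstat_t : lam t * (τ * t + dρ (lam t)) = 1 := hstat.self_of_nhds
  have hinv := inv_eq_of_mul_eq_one_right hstat_t
  have hF := hlam.mul (((hasDerivAt_id t).const_mul τ).add (hdρ.comp t hlam))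
  have himplicit : D * (τ * t + dρ (lam t)) + lam t * (τ * 1 + B * D) = 0 :=
    hF.unique ((hasDerivAt_const t (1 : ℝ)).congr_of_eventuallyEq hstat)
  have hden : (τ * t + dρ (lam t)) ^ 2 + B ≠ 0 := by
    rwa [← hinv, inv_pow, ← one_div]
  rw [eq_div_iff hden]
  linear_combination (τ * t + dρ (lam t)) * himplicit - (τ + B * D) * hstat_t

theorem stmt_17_general (τ : ℝ) (ρ lam : ℝ → ℝ)
    (hρ1 : ∀ x : ℝ, 0 < x → DifferentiableAt ℝ ρ x)
    (hρ2 : ∀ x : ℝ, 0 < x → DifferentiableAt ℝ (deriv ρ) x)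
    (hlampos : ∀ t : ℝ, 0 ≤ t → 0 < lam t)
    (hlamdiff : ∀ t : ℝ, 0 ≤ t → DifferentiableAt ℝ lam t)
    (hstat : ∀ t : ℝ, 0 ≤ t → lam t * (τ*t + deriv ρ (lam t)) = 1)
    (hnz : ∀ t : ℝ, 0 ≤ t → 1/(lam t)^2 + deriv (deriv ρ) (lam t) ≠ 0) :
    let g : ℝ → ℝ := fun s => τ * lam s * s - Real.log (lam s) + ρ (lam s)
    ∀ t : ℝ, 0 < t → DifferentiableAt ℝ g t ∧
      HasDerivAt (deriv g)
        (-τ^2 / ((τ*t + deriv ρ (lam t))^2 + deriv (deriv ρ) (lam t))) t := by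
  intro g t ht
  have hg : ∀ s, 0 ≤ s → HasDerivAt g (τ * lam s) s := fun s hs =>
    hasDerivAt_profiledPenalty (hlamdiff s hs).hasDerivAt (hρ1 _ (hlampos s hs)) (hstat s hs)
  have hnear : ∀ᶠ s in 𝓝 t, 0 ≤ s := (eventually_gt_nhds ht).mono fun _ hs => hs.le
  have hg' : deriv g =ᶠ[𝓝 t] fun s => τ * lam s :=
    hnear.mono fun s hs => (hg s hs).deriv
  have hlam' := deriv_eq_of_stationary (hlamdiff t ht.le).hasDerivAt
    (hρ2 _ (hlampos t ht.le)).hasDerivAt (hnear.mono hstat) (hnz t ht.le)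
  refine ⟨(hg t ht.le).differentiableAt, ?_⟩
  refine (((hlamdiff t ht.le).hasDerivAt.const_mul τ).congr_of_eventuallyEq hg').congr_deriv ?_
  rw [hlam']
  ring

/-- Second derivative of the profiled penalty:
g''(t) = −τ² / ((τt + ρ'(λ*(t)))² + ρ''(λ*(t))). -/
theorem stmt_17 (τ : ℝ) (hτ : 0 < τ) (ρ lam : ℝ → ℝ)
    (hρ1 : ∀ x : ℝ, 0 < x → DifferentiableAt ℝ ρ x)
    (hρ2 : ∀ x : ℝ, 0 < x → DifferentiableAt ℝ (deriv ρ) x)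
    (hlampos : ∀ t : ℝ, 0 ≤ t → 0 < lam t)
    (hlamdiff : ∀ t : ℝ, 0 ≤ t → DifferentiableAt ℝ lam t)
    (hstat : ∀ t : ℝ, 0 ≤ t → lam t * (τ*t + deriv ρ (lam t)) = 1)
    (hnz : ∀ t : ℝ, 0 ≤ t → 1/(lam t)^2 + deriv (deriv ρ) (lam t) ≠ 0) :
    let g : ℝ → ℝ := fun s => τ * lam s * s - Real.log (lam s) + ρ (lam s)
    ∀ t : ℝ, 0 < t → DifferentiableAt ℝ g t ∧
      HasDerivAt (deriv g)
        (-τ^2 / ((τ*t + deriv ρ (lam t))^2 + deriv (deriv ρ) (lam t))) t :=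
  stmt_17_general τ ρ lam hρ1 hρ2 hlampos hlamdiff hstat hnz
end
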